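/- Let A be a real N×N matrix, b_0, b_1, …, b_p ∈ ℝ^N, B the N×p matrix whose k-th column is b_{p+1−k}, K the p×p nilpotent matrix with K(i, i+1) = 1 for 1 ≤ i ≤ p−1 and all other entries zero, and τ ∈ ℝ. For a nonzero scalar ν ∈ ℝ, set Ã_ν = [[A, νB], [0, K]] and v_ν = [b_0; (1/ν) e_p] ∈ ℝ^{N+p}, where e_p is the p-th standard basis vector of ℝ^p. Then the first N components of e^{τÃ_ν} v_ν are independent of ν: for every nonzero ν, (e^{τÃ_ν} v_ν)(1:N) = (e^{τÃ_1} v_1)(1:N) = Σ_{j=0}^{p} τ^j φ_j(τA) b_j. -/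

import Mathlib

open Matrix MeasureTheory
open scoped Nat

attribute [local instance] Matrix.normedAddCommGroup Matrix.normedSpace

/-- The matrix `φ`-functions: `φ₀(M) = e^M` and
`φ_k(M) = ∫_0^1 e^{(1-θ)M} θ^{k-1}/(k-1)! dθ` for `k ≥ 1`. -/
noncomputable def phi {n : ℕ} (k : ℕ) (M : Matrix (Fin n) (Fin n) ℝ) :
    Matrix (Fin n) (Fin n) ℝ :=
  if k = 0 then NormedSpace.exp M
  else ∫ θ in (0:ℝ)..1, ((θ ^ (k - 1) / (k - 1)! : ℝ)) • NormedSpace.exp ((1 - θ) • M)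


/-- The `p × p` nilpotent matrix with `K(i, i+1) = 1` and all other entries zero. -/
noncomputable def Ktilde (p : ℕ) : Matrix (Fin p) (Fin p) ℝ :=
  Matrix.of fun i j => if (j : ℕ) = (i : ℕ) + 1 then 1 else 0

/-- The `N × p` matrix whose `k`-th column is `b_{p+1-k}`, i.e. `B = [b_p, …, b_2, b_1]`. -/
noncomputable def Bmat {N : ℕ} (p : ℕ) (b : ℕ → Fin N → ℝ) : Matrix (Fin N) (Fin p) ℝ :=
  Matrix.of fun i j => b (p - (j : ℕ)) i

/-- The `p`-th standard basis vector of `ℝ^p` (last coordinate equal to one). -/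
noncomputable def ep (p : ℕ) : Fin p → ℝ := fun i => if (i : ℕ) = p - 1 then 1 else 0

/-!
The top block of `Ã_ν ^ n v_ν` is `∑_{j ≤ min n p} A ^ (n - j) b_j`: in the coupling term
`A ^ (n-1-k) (ν B) K ^ k (e_p / ν)` the factors `ν` cancel and `B K ^ k e_p = b_{k+1}` (zero for
`k ≥ p`). Summing the exponential series and regrouping by `j` gives
`∑_j τ ^ j ∑_k (τ A) ^ k b_j / (k + j)!`, and the inner series is `φ_j(τ A) b_j`: expanding
`e^{(1-θ)M}` under the integral and integrating termwise, the beta integral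
`∫₀¹ θ^m (1-θ)^k dθ = m! k! / (m+k+1)!` turns the `k`-th term into `M^k / (k+m+1)!`.
-/

theorem integral_pow_mul_one_sub_pow (a c : ℕ) :
    ∫ x in (0 : ℝ)..1, x ^ a * (1 - x) ^ c = (a ! * c ! : ℝ) / (a + c + 1)! := by
  induction c generalizing a with
  | zero =>
    simp only [pow_zero, mul_one, integral_pow, Nat.factorial_zero, Nat.cast_one, add_zero,
      Nat.factorial_succ, Nat.cast_mul]
    field_simp
    norm_num
  | succ c ih =>
    have hsplit : ∀ x : ℝ,
        x ^ a * (1 - x) ^ (c + 1) = x ^ a * (1 - x) ^ c - x ^ (a + 1) * (1 - x) ^ c :=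
      fun x => by ring
    simp_rw [hsplit]
    rw [intervalIntegral.integral_sub (by apply Continuous.intervalIntegrable; fun_prop)
      (by apply Continuous.intervalIntegrable; fun_prop), ih, ih,
      show a + 1 + c + 1 = a + c + 1 + 1 by ring, show a + (c + 1) + 1 = a + c + 1 + 1 by ring]
    push_cast [Nat.factorial_succ]
    field_simp
    ring

theorem abs_pow_mul_one_sub_pow_div_factorial_le_one {θ : ℝ} (hθ : θ ∈ Set.Icc (0 : ℝ) 1)
    (m k : ℕ) : |θ ^ m * (1 - θ) ^ k / m !| ≤ 1 := by
  obtain ⟨hθ0, hθ1⟩ := hθ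
  have h1θ : 0 ≤ 1 - θ := by linarith
  have hnonneg : 0 ≤ θ ^ m * (1 - θ) ^ k := mul_nonneg (pow_nonneg hθ0 m) (pow_nonneg h1θ k)
  have hle : θ ^ m * (1 - θ) ^ k ≤ 1 :=
    mul_le_one₀ (pow_le_one₀ hθ0 hθ1) (pow_nonneg h1θ k) (pow_le_one₀ h1θ (by linarith))
  rw [abs_of_nonneg (by positivity), div_le_one (by positivity)]
  exact hle.trans (mod_cast m.factorial_pos)

-- The exponential series converges in the `L∞` operator norm, which induces the usual topology.
theorem Matrix.exp_series_hasSum_exp' {m : Type*} [Fintype m] [DecidableEq m]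
    (M : Matrix m m ℝ) :
    HasSum (fun n : ℕ => ((n ! : ℝ))⁻¹ • M ^ n) (NormedSpace.exp M) := by
  open scoped Norms.Operator in exact NormedSpace.exp_series_hasSum_exp' M

theorem hasSum_phi {n : ℕ} (j : ℕ) (M : Matrix (Fin n) (Fin n) ℝ) :
    HasSum (fun k : ℕ => (((k + j)! : ℝ))⁻¹ • M ^ k) (phi j M) := by
  rcases j with _ | m
  · simpa [phi] using Matrix.exp_series_hasSum_exp' M
  set F : ℕ → ℝ → Matrix (Fin n) (Fin n) ℝ :=
    fun k θ => (θ ^ m * (1 - θ) ^ k / m !) • (((k ! : ℝ))⁻¹ • M ^ k)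
  have hF : ∀ θ, HasSum (F · θ) ((θ ^ m / m ! : ℝ) • NormedSpace.exp ((1 - θ) • M)) := by
    intro θ
    convert (Matrix.exp_series_hasSum_exp' ((1 - θ) • M)).const_smul (θ ^ m / m ! : ℝ) using 1
    funext k
    simp only [F, smul_pow, smul_smul]
    ring_nf
  have hbound : ∀ k, ∀ θ ∈ Set.uIoc (0 : ℝ) 1, ‖F k θ‖ ≤ ‖((k ! : ℝ))⁻¹ • M ^ k‖ := by
    intro k θ hθ
    rw [Set.uIoc_of_le zero_le_one] at hθ
    rw [norm_smul, Real.norm_eq_abs]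
    exact mul_le_of_le_one_left (norm_nonneg _)
      (abs_pow_mul_one_sub_pow_div_factorial_le_one (Set.Ioc_subset_Icc_self hθ) m k)
  have hint : ∀ k, ∫ θ in (0 : ℝ)..1, F k θ = (((k + (m + 1))! : ℝ))⁻¹ • M ^ k := by
    intro k
    simp only [F]
    rw [intervalIntegral.integral_smul_const, intervalIntegral.integral_div,
      integral_pow_mul_one_sub_pow, smul_smul, show k + (m + 1) = m + k + 1 by ring]
    congr 1
    field_simp
  have hsum := intervalIntegral.hasSum_integral_of_dominated_convergence
    (fun k _ => ‖((k ! : ℝ))⁻¹ • M ^ k‖)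
    (fun k => ((by fun_prop : Continuous (F k)).intervalIntegrable 0 1).def'.aestronglyMeasurable)
    (fun k => Filter.Eventually.of_forall (hbound k))
    (Filter.Eventually.of_forall fun _ _ =>
      summable_norm_iff.mpr (Matrix.exp_series_hasSum_exp' M).summable)
    (intervalIntegrable_const (μ := volume))
    (Filter.Eventually.of_forall fun θ _ => hF θ)
  rw [funext hint] at hsum
  have hphi : phi (m + 1) M =
      ∫ θ in (0 : ℝ)..1, (θ ^ m / m ! : ℝ) • NormedSpace.exp ((1 - θ) • M) := by
    simp [phi]
  rw [hphi]
  exact hsum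

theorem Matrix.fromBlocks_zero₂₁_pow_mulVec {l m α : Type*} [Fintype l] [Fintype m]
    [DecidableEq l] [DecidableEq m] [Semiring α]
    (A : Matrix l l α) (C : Matrix l m α) (D : Matrix m m α) (x : l → α) (y : m → α) (n : ℕ) :
    fromBlocks A C 0 D ^ n *ᵥ Sum.elim x y =
      Sum.elim (A ^ n *ᵥ x + ∑ k ∈ Finset.range n, A ^ (n - 1 - k) *ᵥ C *ᵥ D ^ k *ᵥ y)
        (D ^ n *ᵥ y) := by
  induction n generalizing x y with
  | zero => simp
  | succ n ih =>
    have hstep : fromBlocks A C 0 D *ᵥ Sum.elim x y = Sum.elim (A *ᵥ x + C *ᵥ y) (D *ᵥ y) := by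
      simp [fromBlocks_mulVec]
    have hterm : ∀ k ∈ Finset.range n, A ^ (n - 1 - k) *ᵥ C *ᵥ D ^ k *ᵥ D *ᵥ y =
        A ^ (n + 1 - 1 - (k + 1)) *ᵥ C *ᵥ D ^ (k + 1) *ᵥ y := by
      intro k _
      rw [mulVec_mulVec (M := D ^ k), ← pow_succ, Nat.add_sub_cancel, Nat.sub_sub, add_comm 1 k]
    rw [pow_succ, ← mulVec_mulVec, hstep, ih, Finset.sum_congr rfl hterm, Finset.sum_range_succ',
      mulVec_add, mulVec_mulVec (M := A ^ n) (N := A), ← pow_succ, mulVec_mulVec (M := D ^ n),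
      ← pow_succ]
    simp only [pow_zero, one_mulVec, Nat.add_sub_cancel, Nat.sub_zero]
    rw [add_assoc, add_comm (A ^ n *ᵥ C *ᵥ y)]

theorem Ktilde_mulVec {p : ℕ} (w : Fin p → ℝ) (i : Fin p) :
    (Ktilde p *ᵥ w) i = if h : (i : ℕ) + 1 < p then w ⟨i + 1, h⟩ else 0 := by
  simp only [mulVec, dotProduct, Ktilde, of_apply, ite_mul, one_mul, zero_mul]
  split_ifs with h
  · rw [Finset.sum_eq_single ⟨i + 1, h⟩ (fun j _ hj => if_neg fun hji => hj (Fin.ext hji))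
      (by simp), if_pos rfl]
  · exact Finset.sum_eq_zero fun j _ => if_neg (by omega)

theorem Ktilde_pow_mulVec_ep (p k : ℕ) :
    Ktilde p ^ k *ᵥ ep p = fun i : Fin p => if (i : ℕ) + k = p - 1 then (1 : ℝ) else 0 := by
  induction k with
  | zero => simp only [pow_zero, one_mulVec, add_zero]; rfl
  | succ k ih =>
    funext i
    rw [pow_succ', ← mulVec_mulVec, Ktilde_mulVec, ih]
    dsimp only [Fin.val_mk]
    split_ifs <;> first | rfl | (exfalso; omega)

theorem Bmat_mulVec_Ktilde_pow_mulVec_ep {N : ℕ} (p : ℕ) (b : ℕ → Fin N → ℝ) (k : ℕ) :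
    Bmat p b *ᵥ Ktilde p ^ k *ᵥ ep p = if k < p then b (k + 1) else 0 := by
  funext i
  rw [Ktilde_pow_mulVec_ep]
  simp only [mulVec, dotProduct, Bmat, of_apply, mul_ite, mul_one, mul_zero]
  split_ifs with hk
  · have hj : ∀ j : Fin p, (j : ℕ) + k = p - 1 ↔ j = ⟨p - 1 - k, by omega⟩ := by
      intro j
      simp only [Fin.ext_iff]
      omega
    simp_rw [hj, Finset.sum_ite_eq', Finset.mem_univ, if_true]
    congr 2
    omega
  · exact Finset.sum_eq_zero fun j _ => if_neg (by omega)

theorem hasSum_pow_mulVec_phi {n : ℕ} (M : Matrix (Fin n) (Fin n) ℝ) (v : Fin n → ℝ) (τ : ℝ)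
    (j : ℕ) :
    HasSum (fun k => if j ≤ k then ((k ! : ℝ)⁻¹ * τ ^ k) • (M ^ (k - j) *ᵥ v) else 0)
      (τ ^ j • (phi j (τ • M) *ᵥ v)) := by
  have h : HasSum (fun k => τ ^ j • (((((k + j)! : ℝ))⁻¹ • (τ • M) ^ k) *ᵥ v))
      (τ ^ j • (phi j (τ • M) *ᵥ v)) :=
    ((hasSum_phi j (τ • M)).map (mulVec.addMonoidHomLeft v)
      (continuous_id.matrix_mulVec continuous_const)).const_smul (τ ^ j)
  have hterm : (fun k => τ ^ j • (((((k + j)! : ℝ))⁻¹ • (τ • M) ^ k) *ᵥ v)) =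
      fun k => if j ≤ k + j then ((((k + j)! : ℝ))⁻¹ * τ ^ (k + j)) • (M ^ (k + j - j) *ᵥ v)
        else 0 := by
    funext k
    rw [if_pos (Nat.le_add_left j k), Nat.add_sub_cancel,
      smul_pow, smul_smul, smul_mulVec, smul_smul, pow_add]
    congr 1
    ring
  have hzero : ∑ k ∈ Finset.range j,
      (if j ≤ k then ((k ! : ℝ)⁻¹ * τ ^ k) • (M ^ (k - j) *ᵥ v) else 0) = 0 :=
    Finset.sum_eq_zero fun k hk => if_neg (by simpa using hk)
  refine (hasSum_nat_add_iff' j).mp ?_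
  rw [hzero, sub_zero]
  exact hterm ▸ h

theorem fromBlocks_Bmat_Ktilde_pow_mulVec_comp_inl {N p : ℕ} (A : Matrix (Fin N) (Fin N) ℝ)
    (b : ℕ → Fin N → ℝ) {ν : ℝ} (hν : ν ≠ 0) (n : ℕ) :
    (fromBlocks A (ν • Bmat p b) 0 (Ktilde p) ^ n *ᵥ Sum.elim (b 0) ((1 / ν) • ep p)) ∘ Sum.inl =
      ∑ j ∈ Finset.range (p + 1), if j ≤ n then A ^ (n - j) *ᵥ b j else 0 := by
  have hsummand : ∀ k, A ^ (n - 1 - k) *ᵥ (ν • Bmat p b) *ᵥ Ktilde p ^ k *ᵥ (1 / ν) • ep p =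
      if k < p then A ^ (n - (k + 1)) *ᵥ b (k + 1) else 0 := by
    intro k
    rw [mulVec_smul, mulVec_smul, smul_mulVec, smul_smul, one_div_mul_cancel hν, one_smul,
      Bmat_mulVec_Ktilde_pow_mulVec_ep, Nat.sub_sub, add_comm 1 k, apply_ite (A ^ _ *ᵥ ·),
      mulVec_zero]
  rw [fromBlocks_zero₂₁_pow_mulVec, Sum.elim_comp_inl, Finset.sum_congr rfl fun k _ => hsummand k,
    Finset.sum_range_succ', if_pos n.zero_le, Nat.sub_zero, add_comm, ← Finset.sum_filter,
    ← Finset.sum_filter]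
  congr 2
  ext k
  simp only [Finset.mem_filter, Finset.mem_range]
  omega

theorem exp_fromBlocks_Bmat_Ktilde_mulVec_comp_inl {N p : ℕ} (A : Matrix (Fin N) (Fin N) ℝ)
    (b : ℕ → Fin N → ℝ) (τ : ℝ) {ν : ℝ} (hν : ν ≠ 0) :
    (NormedSpace.exp (τ • fromBlocks A (ν • Bmat p b) 0 (Ktilde p)) *ᵥ
        Sum.elim (b 0) ((1 / ν) • ep p)) ∘ Sum.inl =
      ∑ j ∈ Finset.range (p + 1), τ ^ j • (phi j (τ • A) *ᵥ b j) := by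
  set T := fromBlocks A (ν • Bmat p b) 0 (Ktilde p)
  set v := Sum.elim (b 0) ((1 / ν) • ep p)
  have hexp : HasSum (fun k => ((k ! : ℝ)⁻¹ * τ ^ k) • ((T ^ k *ᵥ v) ∘ Sum.inl))
      ((NormedSpace.exp (τ • T) *ᵥ v) ∘ Sum.inl) := by
    have h : HasSum (fun k => (((k ! : ℝ))⁻¹ • (τ • T) ^ k) *ᵥ v) (NormedSpace.exp (τ • T) *ᵥ v) :=
      (Matrix.exp_series_hasSum_exp' (τ • T)).map (mulVec.addMonoidHomLeft v)
        (continuous_id.matrix_mulVec continuous_const)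
    refine Pi.hasSum.mpr fun i => ?_
    convert Pi.hasSum.mp h (Sum.inl i) using 1
    · funext k
      simp [smul_pow, smul_smul, smul_mulVec]
    · rfl
  have hphi := hasSum_sum fun j (_ : j ∈ Finset.range (p + 1)) => hasSum_pow_mulVec_phi A (b j) τ j
  refine hexp.unique ?_
  convert hphi using 1
  funext k
  rw [fromBlocks_Bmat_Ktilde_pow_mulVec_comp_inl A b hν k, Finset.smul_sum]
  simp only [smul_ite, smul_zero]

theorem stmt14_general {N p : ℕ} (A : Matrix (Fin N) (Fin N) ℝ)
    (b : ℕ → Fin N → ℝ) (τ : ℝ) :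
    ∀ ν : ℝ, ν ≠ 0 → ∀ i : Fin N,
      (NormedSpace.exp
            (τ • Matrix.fromBlocks A (ν • Bmat p b) 0 (Ktilde p))).mulVec
          (Sum.elim (b 0) ((1 / ν) • ep p)) (Sum.inl i)
        = (NormedSpace.exp
              (τ • Matrix.fromBlocks A ((1 : ℝ) • Bmat p b) 0 (Ktilde p))).mulVec
            (Sum.elim (b 0) ((1 / (1 : ℝ)) • ep p)) (Sum.inl i) ∧
      (NormedSpace.exp
            (τ • Matrix.fromBlocks A (ν • Bmat p b) 0 (Ktilde p))).mulVec
          (Sum.elim (b 0) ((1 / ν) • ep p)) (Sum.inl i)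
        = ∑ j ∈ Finset.range (p + 1), (τ ^ j • (phi j (τ • A)).mulVec (b j)) i := by
  intro ν hν i
  have hν' := congrFun (exp_fromBlocks_Bmat_Ktilde_mulVec_comp_inl (p := p) A b τ hν) i
  have hone := congrFun (exp_fromBlocks_Bmat_Ktilde_mulVec_comp_inl (p := p) A b τ one_ne_zero) i
  simp only [Function.comp_apply, Finset.sum_apply] at hν' hone
  exact ⟨hν'.trans hone.symm, hν'⟩

theorem stmt14 {N p : ℕ} (hp : 0 < p) (A : Matrix (Fin N) (Fin N) ℝ)
    (b : ℕ → Fin N → ℝ) (τ : ℝ) :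
    ∀ ν : ℝ, ν ≠ 0 → ∀ i : Fin N,
      (NormedSpace.exp
            (τ • Matrix.fromBlocks A (ν • Bmat p b) 0 (Ktilde p))).mulVec
          (Sum.elim (b 0) ((1 / ν) • ep p)) (Sum.inl i)
        = (NormedSpace.exp
              (τ • Matrix.fromBlocks A ((1 : ℝ) • Bmat p b) 0 (Ktilde p))).mulVec
            (Sum.elim (b 0) ((1 / (1 : ℝ)) • ep p)) (Sum.inl i) ∧
      (NormedSpace.exp
            (τ • Matrix.fromBlocks A (ν • Bmat p b) 0 (Ktilde p))).mulVec
          (Sum.elim (b 0) ((1 / ν) • ep p)) (Sum.inl i)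
        = ∑ j ∈ Finset.range (p + 1), (τ ^ j • (phi j (τ • A)).mulVec (b j)) i :=
  stmt14_general A b τ
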